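/- arXiv:2208.11272 — 7 statements merged into one kernel-verified Lean document; each statement's English description precedes it below -/
import Mathlib

section
/- Let M be a matroid and I an independent set. Suppose u₁,…,u_ℓ ∈ U \ I and v₁,…,v_ℓ ∈ I are distinct elements such that each u_i ∈ sp_M(I), each v_i ∈ C_M(u_i, I), and v_i ∉ C_M(u_j, I) whenever i < j. Define J := (I ∪ {u₁,…,u_ℓ}) \ {v₁,…,v_ℓ}. Then J is independent and sp_M(I) ∪ I = sp_M(J) ∪ J. -/
open Finset
open scoped Classical

/-- A matroid on a finite ground type `U`, given by its independent sets. -/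
structure FinMatroid (U : Type*) [DecidableEq U] [Fintype U] where
  Indep : Finset U → Prop
  empty_indep : Indep ∅
  subset_indep : ∀ ⦃I J : Finset U⦄, I ⊆ J → Indep J → Indep I
  exchange : ∀ ⦃I J : Finset U⦄, Indep I → Indep J → I.card < J.card →
    ∃ u ∈ J, u ∉ I ∧ Indep (insert u I)

namespace FinMatroid

variable {U : Type*} [DecidableEq U] [Fintype U]

/-- A circuit: an inclusion-wise minimal dependent set. -/
def Circuit (M : FinMatroid U) (C : Finset U) : Prop :=
  ¬ M.Indep C ∧ ∀ D ⊂ C, M.Indep D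

/-- `sp M I`: elements `u ∉ I` with `I + u` dependent. -/
def sp (M : FinMatroid U) (I : Finset U) : Set U :=
  {u | u ∉ I ∧ ¬ M.Indep (insert u I)}

/-- The fundamental circuit of `u` for the independent set `I`
(for `u ∈ sp M I` this is the unique circuit contained in `I + u`). -/
noncomputable def fundC (M : FinMatroid U) (I : Finset U) (u : U) : Finset U :=
  (insert u I).filter (fun w => M.Indep ((insert u I).erase w))

/-- The rank of a set: maximum size of an independent subset. -/
noncomputable def rk (M : FinMatroid U) (X : Finset U) : ℕ :=
  ((X.powerset).filter (fun I => M.Indep I)).sup Finset.card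

end FinMatroid

variable {U : Type*} [DecidableEq U] [Fintype U]

/-- Independence predicate of the restriction of an independence system to `X`. -/
def RestrictIndep (Ind : Finset U → Prop) (X : Finset U) (I : Finset U) : Prop :=
  I ⊆ X ∧ Ind I

/-- Rank function associated with an independence predicate. -/
noncomputable def rkOf (Ind : Finset U → Prop) (X : Finset U) : ℕ :=
  ((X.powerset).filter Ind).sup Finset.card

/-- Independence predicate of the contraction by `X`:
`I ⊆ U \ X` is independent iff `r(I ∪ X) - r(X) = |I|`. -/
def ContractIndepOf (Ind : Finset U → Prop) (X I : Finset U) : Prop :=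
  Disjoint I X ∧ rkOf Ind (I ∪ X) = rkOf Ind X + I.card

/-- A base: a maximal independent set. -/
def BaseOf (Ind : Finset U → Prop) (B : Finset U) : Prop :=
  Ind B ∧ ∀ J, Ind J → B ⊆ J → J = B

/-- A circuit of a general independence system. -/
def CircuitOf (Ind : Finset U → Prop) (C : Finset U) : Prop :=
  ¬ Ind C ∧ ∀ D ⊂ C, Ind D

namespace IriAux
variable {U : Type*} [DecidableEq U] [Fintype U] (M : FinMatroid U)

lemma mem_fundC {I : Finset U} {x z : U} :
    z ∈ M.fundC I x ↔ z ∈ insert x I ∧ M.Indep ((insert x I).erase z) := by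
  simp [FinMatroid.fundC]

lemma fundC_subset_of_dep {I : Finset U} {x : U} {D : Finset U}
    (hD : D ⊆ insert x I) (hdep : ¬ M.Indep D) : M.fundC I x ⊆ D := by
  intro z hz
  by_contra hzD
  rw [mem_fundC] at hz
  exact hdep (M.subset_indep
    (fun w hw => Finset.mem_erase.2 ⟨fun h => hzD (by rw [← h]; exact hw), hD hw⟩) hz.2)

lemma indep_of_ssubset_fundC {I : Finset U} {x : U} {D : Finset U}
    (hD : D ⊂ M.fundC I x) : M.Indep D := by
  by_contra hdep
  have h1 : D ⊆ insert x I := hD.subset.trans (Finset.filter_subset _ _)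
  exact hD.not_subset (fundC_subset_of_dep M h1 hdep)

lemma exists_max_extension {B C : Finset U} (hC : M.Indep C) (hCB : C ⊆ B) :
    ∃ T, C ⊆ T ∧ T ⊆ B ∧ M.Indep T ∧
      ∀ T', C ⊆ T' → T' ⊆ B → M.Indep T' → T'.card ≤ T.card := by
  classical
  have hne : (B.powerset.filter (fun T => C ⊆ T ∧ M.Indep T)).Nonempty :=
    ⟨C, by simp [hCB, hC]⟩
  obtain ⟨T, hT, hmax⟩ := Finset.exists_max_image _ Finset.card hne
  simp only [Finset.mem_filter, Finset.mem_powerset] at hT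
  exact ⟨T, hT.2.1, hT.1, hT.2.2, fun T' h1 h2 h3 =>
    hmax T' (by simp [Finset.mem_filter, Finset.mem_powerset, h1, h2, h3])⟩

lemma fundC_dep {I : Finset U} {x : U} (hI : M.Indep I) (hx : x ∉ I)
    (hdep : ¬ M.Indep (insert x I)) : ¬ M.Indep (M.fundC I x) := by
  intro hC
  have hCB : M.fundC I x ⊆ insert x I := Finset.filter_subset _ _
  obtain ⟨T, hCT, hTB, hTind, hmax⟩ := exists_max_extension M hC hCB
  have hTI : I.card ≤ T.card := by
    by_contra h
    push_neg at h
    obtain ⟨z, hzI, hzT, hzind⟩ := M.exchange hTind hI h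
    have := hmax (insert z T) (hCT.trans (Finset.subset_insert _ _))
      (Finset.insert_subset (Finset.mem_insert_of_mem hzI) hTB) hzind
    rw [Finset.card_insert_of_notMem hzT] at this
    omega
  have hTne : T ≠ insert x I := fun h => hdep (h ▸ hTind)
  have hTss : T ⊂ insert x I := Finset.ssubset_iff_subset_ne.2 ⟨hTB, hTne⟩
  have hBcard : (insert x I).card = I.card + 1 := Finset.card_insert_of_notMem hx
  obtain ⟨y, hyB, hyT⟩ := Finset.exists_of_ssubset hTss
  have hsub : T ⊆ (insert x I).erase y :=
    fun w hw => Finset.mem_erase.2 ⟨fun h => hyT (h ▸ hw), hTB hw⟩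
  have hTeq : T = (insert x I).erase y :=
    Finset.eq_of_subset_of_card_le hsub (by rw [Finset.card_erase_of_mem hyB]; omega)
  have hy : y ∈ M.fundC I x := (mem_fundC M).2 ⟨hyB, hTeq ▸ hTind⟩
  exact hyT (hCT hy)

lemma fundC_eq {I I' : Finset U} {w : U} (hI' : M.Indep I')
    (hwI' : ¬ M.Indep (insert w I')) (hw' : w ∉ I')
    (hI : M.Indep I) (hwI : ¬ M.Indep (insert w I)) (hw : w ∉ I)
    (hsub : M.fundC I w ⊆ insert w I') : M.fundC I' w = M.fundC I w := by
  have h1 : M.fundC I' w ⊆ M.fundC I w :=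
    fundC_subset_of_dep M hsub (fundC_dep M hI hw hwI)
  rcases eq_or_ne (M.fundC I' w) (M.fundC I w) with h | h
  · exact h
  · exact absurd (indep_of_ssubset_fundC M (Finset.ssubset_iff_subset_ne.2 ⟨h1, h⟩))
      (fundC_dep M hI' hw' hwI')

lemma sub1 {B : Finset U} (hB : M.Indep B) {T : Finset U} (hT : M.Indep T)
    (hTsub : ↑T ⊆ M.sp B ∪ ↑B) : T.card ≤ B.card := by
  by_contra h
  push_neg at h
  obtain ⟨t, htT, htB, hind⟩ := M.exchange hB hT h
  rcases hTsub (Finset.mem_coe.2 htT) with hsp | hmem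
  · exact hsp.2 hind
  · exact htB (Finset.mem_coe.1 hmem)

lemma spancl_eq {A B : Finset U} (hA : M.Indep A) (hB : M.Indep B)
    (hcard : A.card = B.card) (hAB : ↑A ⊆ M.sp B ∪ ↑B) :
    M.sp A ∪ ↑A = M.sp B ∪ ↑B := by
  apply Set.Subset.antisymm
  · intro x hx
    by_contra hxB
    have hxnB : x ∉ B := fun h => hxB (Or.inr (Finset.mem_coe.2 h))
    have hxBind : M.Indep (insert x B) := by
      by_contra h; exact hxB (Or.inl ⟨hxnB, h⟩)
    have hxnA : x ∉ A := fun h => hxB (hAB (Finset.mem_coe.2 h))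
    have hxAind : ¬ M.Indep (insert x A) := by
      rcases hx with h | h
      · exact h.2
      · exact absurd (Finset.mem_coe.1 h) hxnA
    have hc : A.card < (insert x B).card := by
      rw [Finset.card_insert_of_notMem hxnB]; omega
    obtain ⟨t, htxB, htA, htind⟩ := M.exchange hA hxBind hc
    have htne : t ≠ x := fun h => hxAind (h ▸ htind)
    have htB : t ∈ B := (Finset.mem_insert.1 htxB).resolve_left htne
    have hle : (insert t A).card ≤ B.card := by
      apply sub1 M hB htind
      intro z hz
      rcases Finset.mem_insert.1 (Finset.mem_coe.1 hz) with h | h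
      · exact Or.inr (Finset.mem_coe.2 (h ▸ htB))
      · exact hAB (Finset.mem_coe.2 h)
    rw [Finset.card_insert_of_notMem htA] at hle
    omega
  · intro x hx
    by_contra hxA
    have hxnA : x ∉ A := fun hh => hxA (Or.inr (Finset.mem_coe.2 hh))
    have hxAind : M.Indep (insert x A) := by
      by_contra hh; exact hxA (Or.inl ⟨hxnA, hh⟩)
    have hle : (insert x A).card ≤ B.card := by
      apply sub1 M hB hxAind
      intro z hz
      rcases Finset.mem_insert.1 (Finset.mem_coe.1 hz) with hh | hh
      · rw [hh]; exact hx
      · exact hAB (Finset.mem_coe.2 hh)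
    rw [Finset.card_insert_of_notMem hxnA] at hle
    omega

lemma main (ℓ : ℕ) : ∀ (I : Finset U), M.Indep I → ∀ (u v : Fin ℓ → U),
    Function.Injective u → Function.Injective v →
    (∀ i, u i ∉ I) → (∀ i, v i ∈ I) →
    (∀ i, u i ∈ M.sp I) → (∀ i, v i ∈ M.fundC I (u i)) →
    (∀ i j : Fin ℓ, i < j → v i ∉ M.fundC I (u j)) →
    M.Indep ((I ∪ Finset.image u Finset.univ) \ Finset.image v Finset.univ) ∧
      (M.sp I ∪ ↑I) =
        (M.sp ((I ∪ Finset.image u Finset.univ) \ Finset.image v Finset.univ) ∪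
          ↑((I ∪ Finset.image u Finset.univ) \ Finset.image v Finset.univ)) := by
  induction ℓ with
  | zero =>
    intro I hI u v _ _ _ _ _ _ _
    have hu : Finset.image u Finset.univ = ∅ := by simp
    have hv : Finset.image v Finset.univ = ∅ := by simp
    rw [hu, hv]
    refine ⟨?_, ?_⟩ <;> simp [hI]
  | succ n ih =>
    intro I hI u v hu_inj hv_inj hu_notin hv_in hsp hvC hlt
    have hI'ind : M.Indep ((insert (u 0) I).erase (v 0)) := ((mem_fundC M).1 (hvC 0)).2
    set I' : Finset U := (insert (u 0) I).erase (v 0) with hI'def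
    have hmemI' : ∀ x, x ∈ I' ↔ x ≠ v 0 ∧ (x = u 0 ∨ x ∈ I) := by
      intro x; rw [hI'def]; simp [Finset.mem_erase, Finset.mem_insert]
    have hcard' : I'.card = I.card := by
      rw [hI'def, Finset.card_erase_of_mem (Finset.mem_insert_of_mem (hv_in 0)),
        Finset.card_insert_of_notMem (hu_notin 0)]
      omega
    have hspan' : M.sp I' ∪ ↑I' = M.sp I ∪ ↑I := by
      apply spancl_eq M hI'ind hI hcard'
      intro x hx
      rcases ((hmemI' x).1 (Finset.mem_coe.1 hx)).2 with h | h
      · rw [h]; exact Or.inl (hsp 0)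
      · exact Or.inr (Finset.mem_coe.2 h)
    have hu'notin : ∀ i : Fin n, u i.succ ∉ I' := by
      intro i hmem
      rcases ((hmemI' _).1 hmem).2 with h | h
      · exact Fin.succ_ne_zero i (hu_inj h)
      · exact hu_notin i.succ h
    have hu'sp : ∀ i : Fin n, u i.succ ∈ M.sp I' := by
      intro i
      have hx : u i.succ ∈ M.sp I ∪ ↑I := Or.inl (hsp i.succ)
      rw [← hspan'] at hx
      rcases hx with h | h
      · exact h
      · exact absurd (Finset.mem_coe.1 h) (hu'notin i)
    have hfund : ∀ i : Fin n, M.fundC I' (u i.succ) = M.fundC I (u i.succ) := by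
      intro i
      apply fundC_eq M hI'ind (hu'sp i).2 (hu'notin i) hI (hsp i.succ).2 (hu_notin i.succ)
      intro z hz
      have hzm := ((mem_fundC M).1 hz).1
      have hzv : z ≠ v 0 := fun h => hlt 0 i.succ (Fin.succ_pos i) (h ▸ hz)
      rcases Finset.mem_insert.1 hzm with h | h
      · rw [h]; exact Finset.mem_insert_self _ _
      · exact Finset.mem_insert_of_mem ((hmemI' z).2 ⟨hzv, Or.inr h⟩)
    obtain ⟨hJ'ind, hJ'span⟩ := ih I' hI'ind (fun i => u i.succ) (fun i => v i.succ)
      (fun a b h => Fin.succ_injective n (hu_inj h))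
      (fun a b h => Fin.succ_injective n (hv_inj h))
      hu'notin
      (fun (i : Fin n) => (hmemI' _).2 ⟨fun h => Fin.succ_ne_zero i (hv_inj h), Or.inr (hv_in i.succ)⟩)
      hu'sp
      (fun (i : Fin n) => (hfund i).symm ▸ hvC i.succ)
      (fun (i j : Fin n) hij => by rw [hfund j]; exact hlt i.succ j.succ (Fin.succ_lt_succ_iff.2 hij))
    have hJeq : (I' ∪ Finset.image (fun (i : Fin n) => u i.succ) Finset.univ) \
        Finset.image (fun (i : Fin n) => v i.succ) Finset.univ
        = (I ∪ Finset.image u Finset.univ) \ Finset.image v Finset.univ := by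
      ext x
      simp only [Finset.mem_sdiff, Finset.mem_union, Finset.mem_image, Finset.mem_univ,
        true_and, hmemI']
      constructor
      · rintro ⟨h1, h2⟩
        rcases h1 with ⟨hxv, h | h⟩ | ⟨i, hi⟩
        · refine ⟨Or.inr ⟨0, h.symm⟩, ?_⟩
          rintro ⟨j, hj⟩
          rcases Fin.eq_zero_or_eq_succ j with rfl | ⟨k, rfl⟩
          · exact hxv hj.symm
          · exact h2 ⟨k, hj⟩
        · refine ⟨Or.inl h, ?_⟩
          rintro ⟨j, hj⟩
          rcases Fin.eq_zero_or_eq_succ j with rfl | ⟨k, rfl⟩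
          · exact hxv hj.symm
          · exact h2 ⟨k, hj⟩
        · refine ⟨Or.inr ⟨i.succ, hi⟩, ?_⟩
          rintro ⟨j, hj⟩
          exact hu_notin i.succ (by rw [hi, ← hj]; exact hv_in j)
      · rintro ⟨h1, h2⟩
        have hxv : x ≠ v 0 := fun h => h2 ⟨0, h.symm⟩
        refine ⟨?_, fun ⟨k, hk⟩ => h2 ⟨k.succ, hk⟩⟩
        rcases h1 with h | ⟨j, hj⟩
        · exact Or.inl ⟨hxv, Or.inr h⟩
        · rcases Fin.eq_zero_or_eq_succ j with rfl | ⟨k, rfl⟩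
          · exact Or.inl ⟨hxv, Or.inl hj.symm⟩
          · exact Or.inr ⟨k, hj⟩
    rw [hJeq] at hJ'ind hJ'span
    exact ⟨hJ'ind, hspan'.symm.trans hJ'span⟩

end IriAux

theorem iri_tomizawa_sequence (M : FinMatroid U) (I : Finset U) (hI : M.Indep I)
    (ℓ : ℕ) (u v : Fin ℓ → U)
    (hu_inj : Function.Injective u) (hv_inj : Function.Injective v)
    (hu_notin : ∀ i, u i ∉ I) (hv_in : ∀ i, v i ∈ I)
    (hsp : ∀ i, u i ∈ M.sp I)
    (hvC : ∀ i, v i ∈ M.fundC I (u i))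
    (hlt : ∀ i j : Fin ℓ, i < j → v i ∉ M.fundC I (u j)) :
    M.Indep ((I ∪ Finset.image u Finset.univ) \ Finset.image v Finset.univ) ∧
      (M.sp I ∪ ↑I) =
        (M.sp ((I ∪ Finset.image u Finset.univ) \ Finset.image v Finset.univ) ∪
          ↑((I ∪ Finset.image u Finset.univ) \ Finset.image v Finset.univ)) := by
  exact IriAux.main M ℓ I hI u v hu_inj hv_inj hu_notin hv_in hsp hvC hlt
end

section
/- Let M be a matroid, let C, C₁, …, C_ℓ be circuits of M, and let u₁,…,u_ℓ, v be distinct elements of the ground set satisfying: (U1) u_i ∈ C ∩ C_i for all i; (U2) u_i ∉ C_j for all distinct i, j; (U3) v ∈ C \ (C₁ ∪ ⋯ ∪ C_ℓ). Then there exists a circuit C′ of M with C′ ⊆ (C ∪ C₁ ∪ ⋯ ∪ C_ℓ) \ {u₁,…,u_ℓ}. -/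
open Finset
open scoped Classical

variable {U : Type*} [DecidableEq U] [Fintype U]

namespace FinMatroid

lemma exists_circuit_subset (M : FinMatroid U) :
    ∀ X : Finset U, ¬ M.Indep X → ∃ C, M.Circuit C ∧ C ⊆ X := by
  intro X
  induction X using Finset.strongInduction with
  | _ X ih =>
    intro hX
    by_cases h : ∀ D ⊂ X, M.Indep D
    · exact ⟨X, ⟨hX, h⟩, subset_rfl⟩
    · push_neg at h
      obtain ⟨D, hD, hDdep⟩ := h
      obtain ⟨C, hC, hsub⟩ := ih D hD hDdep
      exact ⟨C, hC, hsub.trans hD.subset⟩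

lemma exists_max_indep (M : FinMatroid U) {W Z : Finset U} (hWZ : W ⊆ Z) (hW : M.Indep W) :
    ∃ K, W ⊆ K ∧ K ⊆ Z ∧ M.Indep K ∧
      ∀ J, W ⊆ J → J ⊆ Z → M.Indep J → J.card ≤ K.card := by
  have hne : (Z.powerset.filter (fun K => W ⊆ K ∧ M.Indep K)).Nonempty :=
    ⟨W, by simp [hWZ, hW]⟩
  obtain ⟨K, hK, hmax⟩ := Finset.exists_max_image _ Finset.card hne
  simp only [mem_filter, mem_powerset] at hK
  refine ⟨K, hK.2.1, hK.1, hK.2.2, fun J h1 h2 h3 => ?_⟩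
  exact hmax J (by simp [mem_filter, mem_powerset, h1, h2, h3])

lemma indep_card_le (M : FinMatroid U) {W Z : Finset U} {x : U}
    (hWZ : W ⊆ Z) (hW : M.Indep W) (hdep : ¬ M.Indep (insert x W))
    {J : Finset U} (hJ : J ⊆ insert x Z) (hJi : M.Indep J) :
    ∃ K, K ⊆ Z ∧ M.Indep K ∧ J.card ≤ K.card := by
  obtain ⟨K, hWK, hKZ, hKi, hmax⟩ := M.exists_max_indep hWZ hW
  refine ⟨K, hKZ, hKi, ?_⟩
  by_contra hlt
  push_neg at hlt
  obtain ⟨y, hyJ, hyK, hyi⟩ := M.exchange hKi hJi hlt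
  rcases eq_or_ne y x with rfl | hne
  · exact hdep (M.subset_indep (insert_subset_insert _ hWK) hyi)
  · have hyZ : y ∈ Z := by
      rcases Finset.mem_insert.1 (hJ hyJ) with h | h
      · exact absurd h hne
      · exact h
    have := hmax (insert y K) (hWK.trans (subset_insert _ _))
      (insert_subset hyZ hKZ) hyi
    simp [Finset.card_insert_of_notMem hyK] at this

lemma strong_elim (M : FinMatroid U) {C1 C2 : Finset U} {e f : U}
    (hC1 : M.Circuit C1) (hC2 : M.Circuit C2)
    (he1 : e ∈ C1) (he2 : e ∈ C2) (hf1 : f ∈ C1) (hf2 : f ∉ C2) :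
    ∃ D, M.Circuit D ∧ f ∈ D ∧ D ⊆ (C1 ∪ C2) \ {e} := by
  have hef : e ≠ f := fun h => hf2 (h ▸ he2)
  set Z : Finset U := (C1 ∪ C2) \ {e, f} with hZ
  have heZ : e ∉ Z := by simp [hZ]
  have hfZ : f ∉ Z := by simp [hZ]
  have hC2e : C2.erase e ⊆ Z := by
    intro z hz
    rw [Finset.mem_erase] at hz
    simp only [hZ, mem_sdiff, mem_union, mem_insert, mem_singleton]
    exact ⟨Or.inr hz.2, by rintro (rfl | rfl) <;> [exact hz.1 rfl; exact hf2 hz.2]⟩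
  have hC1f : C1.erase f ⊆ insert e Z := by
    intro z hz
    rw [Finset.mem_erase] at hz
    simp only [hZ, mem_insert, mem_sdiff, mem_union, mem_singleton]
    rcases eq_or_ne z e with rfl | hze
    · exact Or.inl rfl
    · exact Or.inr ⟨Or.inl hz.2, by rintro (rfl | rfl) <;> [exact hze rfl; exact hz.1 rfl]⟩
  have hC2ei : M.Indep (C2.erase e) := hC2.2 _ (Finset.erase_ssubset he2)
  have hC2dep : ¬ M.Indep (insert e (C2.erase e)) := by
    rw [Finset.insert_erase he2]; exact hC2.1
  have hC1fi : M.Indep (C1.erase f) := hC1.2 _ (Finset.erase_ssubset hf1)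
  have hC1dep : ¬ M.Indep (insert f (C1.erase f)) := by
    rw [Finset.insert_erase hf1]; exact hC1.1
  obtain ⟨K, -, hKZ, hKi, hmax⟩ := M.exists_max_indep (Finset.empty_subset Z) M.empty_indep
  have hfK : f ∉ K := fun h => hfZ (hKZ h)
  have hdepfK : ¬ M.Indep (insert f K) := by
    intro hind
    have hsub : insert f K ⊆ insert f (insert e Z) := by
      intro z hz
      rcases Finset.mem_insert.1 hz with rfl | hzK
      · exact Finset.mem_insert_self _ _
      · exact Finset.mem_insert_of_mem (Finset.mem_insert_of_mem (hKZ hzK))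
    obtain ⟨K', hK'Z, hK'i, hle'⟩ := M.indep_card_le hC1f hC1fi hC1dep hsub hind
    obtain ⟨K'', hK''Z, hK''i, hle''⟩ := M.indep_card_le hC2e hC2ei hC2dep hK'Z hK'i
    have := hmax K'' (Finset.empty_subset _) hK''Z hK''i
    rw [Finset.card_insert_of_notMem hfK] at hle'
    omega
  obtain ⟨D, hD, hDsub⟩ := M.exists_circuit_subset _ hdepfK
  have hfD : f ∈ D := by
    by_contra hfD
    exact hD.1 (M.subset_indep (fun z hz => by
      rcases Finset.mem_insert.1 (hDsub hz) with rfl | h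
      · exact absurd hz hfD
      · exact h) hKi)
  refine ⟨D, hD, hfD, fun z hz => ?_⟩
  rcases Finset.mem_insert.1 (hDsub hz) with rfl | hzK
  · simp only [mem_sdiff, mem_union, mem_singleton]
    exact ⟨Or.inl hf1, fun h => hef h.symm⟩
  · have := hKZ hzK
    simp only [hZ, mem_sdiff, mem_union, mem_insert, mem_singleton] at this ⊢
    exact ⟨this.1, fun h => this.2 (Or.inl h)⟩

end FinMatroid

theorem circuit_union (M : FinMatroid U) (ℓ : ℕ)
    (C : Finset U) (Ci : Fin ℓ → Finset U)
    (hC : M.Circuit C) (hCi : ∀ i, M.Circuit (Ci i))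
    (u : Fin ℓ → U) (v : U)
    (hu_inj : Function.Injective u) (hvu : ∀ i, v ≠ u i)
    (hU1 : ∀ i, u i ∈ C ∩ Ci i)
    (hU2 : ∀ i j, i ≠ j → u i ∉ Ci j)
    (hU3 : v ∈ C ∧ ∀ i, v ∉ Ci i) :
    ∃ C' : Finset U, M.Circuit C' ∧
      C' ⊆ (C ∪ Finset.univ.biUnion Ci) \ Finset.image u Finset.univ := by
  have key : ∀ s : Finset (Fin ℓ), ∃ D, M.Circuit D ∧ v ∈ D ∧
      D ⊆ (C ∪ s.biUnion Ci) \ s.image u := by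
    intro s
    induction s using Finset.induction with
    | empty => exact ⟨C, hC, hU3.1, by simp⟩
    | @insert a s ha ih =>
      obtain ⟨D, hDc, hvD, hDsub⟩ := ih
      have hmemD : ∀ x ∈ D, (x ∈ C ∪ s.biUnion Ci) ∧ x ∉ s.image u := by
        intro x hx
        have := hDsub hx
        rw [Finset.mem_sdiff] at this
        exact this
      by_cases hua : u a ∈ D
      · obtain ⟨D', hD'c, hvD', hD'sub⟩ := M.strong_elim hDc (hCi a) hua
          ((Finset.mem_inter.1 (hU1 a)).2) hvD (hU3.2 a)
        refine ⟨D', hD'c, hvD', fun x hx => ?_⟩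
        have hx' := hD'sub hx
        rw [Finset.mem_sdiff, Finset.mem_singleton] at hx'
        rw [Finset.mem_sdiff]
        constructor
        · rcases Finset.mem_union.1 hx'.1 with hxD | hxCa
          · have := (hmemD x hxD).1
            rcases Finset.mem_union.1 this with h | h
            · exact Finset.mem_union_left _ h
            · refine Finset.mem_union_right _ ?_
              rw [Finset.mem_biUnion] at h ⊢
              obtain ⟨j, hj, hxj⟩ := h
              exact ⟨j, Finset.mem_insert_of_mem hj, hxj⟩
          · exact Finset.mem_union_right _
              (Finset.mem_biUnion.2 ⟨a, Finset.mem_insert_self _ _, hxCa⟩)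
        · rw [Finset.mem_image]
          rintro ⟨j, hj, rfl⟩
          rcases Finset.mem_insert.1 hj with rfl | hjs
          · exact hx'.2 rfl
          · rcases Finset.mem_union.1 hx'.1 with hxD | hxCa
            · exact (hmemD _ hxD).2 (Finset.mem_image.2 ⟨j, hjs, rfl⟩)
            · exact hU2 j a (fun h => ha (h ▸ hjs)) hxCa
      · refine ⟨D, hDc, hvD, fun x hx => ?_⟩
        rw [Finset.mem_sdiff]
        obtain ⟨hx1, hx2⟩ := hmemD x hx
        constructor
        · rcases Finset.mem_union.1 hx1 with h | h
          · exact Finset.mem_union_left _ h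
          · refine Finset.mem_union_right _ ?_
            rw [Finset.mem_biUnion] at h ⊢
            obtain ⟨j, hj, hxj⟩ := h
            exact ⟨j, Finset.mem_insert_of_mem hj, hxj⟩
        · rw [Finset.mem_image]
          rintro ⟨j, hj, rfl⟩
          rcases Finset.mem_insert.1 hj with rfl | hjs
          · exact hua hx
          · exact hx2 (Finset.mem_image.2 ⟨j, hjs, rfl⟩)
  obtain ⟨D, hDc, -, hDsub⟩ := key Finset.univ
  exact ⟨D, hDc, hDsub⟩
end

section
/- Let M be a matroid, I an independent set, u ∈ sp_M(I), v ∈ C_M(u,I), and set J := I + u - v. Let x ∈ sp_M(I) - u. Then v ∈ C_M(x,I) if and only if u ∈ C_M(x,J). -/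
open Finset
open scoped Classical

variable {U : Type*} [DecidableEq U] [Fintype U]

theorem iri_tomizawa_aux_one (M : FinMatroid U) (I : Finset U) (hI : M.Indep I)
    (u : U) (hu : u ∈ M.sp I) (v : U) (hv : v ∈ M.fundC I u)
    (x : U) (hx : x ∈ M.sp I) (hxu : x ≠ u) :
    v ∈ M.fundC I x ↔ u ∈ M.fundC ((insert u I).erase v) x := by
  obtain ⟨huI, -⟩ := hu
  obtain ⟨hxI, -⟩ := hx
  have hvmem : v ∈ insert u I := (Finset.mem_filter.mp hv).1
  rcases Finset.mem_insert.mp hvmem with rfl | hvI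
  · rw [Finset.erase_insert huI]
  · have hvu : v ≠ u := by rintro rfl; exact huI hvI
    have hxv : x ≠ v := by rintro rfl; exact hxI hvI
    have hseteq : (insert x ((insert u I).erase v)).erase u = (insert x I).erase v := by
      ext w
      simp only [Finset.mem_erase, Finset.mem_insert]
      constructor
      · rintro ⟨hwu, (rfl | ⟨hwv, (rfl | hwI)⟩)⟩
        · exact ⟨hxv, Or.inl rfl⟩
        · exact absurd rfl hwu
        · exact ⟨hwv, Or.inr hwI⟩
      · rintro ⟨hwv, (rfl | hwI)⟩
        · exact ⟨hxu, Or.inl rfl⟩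
        · exact ⟨fun h => huI (h ▸ hwI), Or.inr ⟨hwv, Or.inr hwI⟩⟩
    simp only [FinMatroid.fundC, Finset.mem_filter]
    rw [hseteq]
    constructor
    · rintro ⟨-, h2⟩
      exact ⟨Finset.mem_insert_of_mem (Finset.mem_erase.mpr ⟨hvu.symm, Finset.mem_insert_self u I⟩), h2⟩
    · rintro ⟨-, h2⟩
      exact ⟨Finset.mem_insert_of_mem hvI, h2⟩
end

section
/- Let M be a matroid, I an independent set, u ∈ sp_M(I), v ∈ C_M(u,I), and J := I + u - v. Let x ∈ sp_M(I) - u and y ∈ I - v. If y ∉ C_M(u,I) or v ∉ C_M(x,I), then: y ∈ C_M(x,I) if and only if y ∈ C_M(x,J). -/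
open Finset
open scoped Classical

variable {U : Type*} [DecidableEq U] [Fintype U]

/-- `a` is spanned by `S`: either `a ∈ S` or `S + a` is dependent. -/
def FinMatroid.Spans (M : FinMatroid U) (S : Finset U) (a : U) : Prop :=
  a ∈ S ∨ ¬ M.Indep (insert a S)

lemma indep_card_le_of_spans {M : FinMatroid U} {S T : Finset U}
    (hS : M.Indep S) (hT : M.Indep T) (h : ∀ t ∈ T, M.Spans S t) :
    T.card ≤ S.card := by
  by_contra h'
  obtain ⟨w, hwT, hwS, hind⟩ := M.exchange hS hT (lt_of_not_ge h')
  rcases h w hwT with h1 | h1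
  · exact hwS h1
  · exact h1 hind

lemma exists_spanning_extension {M : FinMatroid U} {T X : Finset U}
    (hT : M.Indep T) (hTX : T ⊆ X) :
    ∃ B, M.Indep B ∧ T ⊆ B ∧ B ⊆ X ∧ ∀ x ∈ X, M.Spans B x := by
  classical
  set 𝒮 := X.powerset.filter (fun S => M.Indep S ∧ T ⊆ S) with h𝒮
  have hne : 𝒮.Nonempty := ⟨T, by simp [h𝒮, hTX, hT]⟩
  obtain ⟨B, hB𝒮, hBmax⟩ := 𝒮.exists_max_image Finset.card hne
  simp only [h𝒮, Finset.mem_filter, Finset.mem_powerset] at hB𝒮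
  obtain ⟨hBX, hBind, hTB⟩ := hB𝒮
  refine ⟨B, hBind, hTB, hBX, fun z hz => ?_⟩
  by_contra hcon
  rw [FinMatroid.Spans] at hcon
  push_neg at hcon
  obtain ⟨hzB, hzind⟩ := hcon
  have hmem : insert z B ∈ 𝒮 := by
    simp only [h𝒮, Finset.mem_filter, Finset.mem_powerset]
    exact ⟨Finset.insert_subset hz hBX, hzind, hTB.trans (Finset.subset_insert _ _)⟩
  have := hBmax _ hmem
  rw [Finset.card_insert_of_notMem hzB] at this
  omega

lemma spans_trans {M : FinMatroid U} {S T : Finset U} {a : U}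
    (hS : M.Indep S) (hT : M.Indep T)
    (hTS : ∀ t ∈ T, M.Spans S t) (ha : M.Spans T a) : M.Spans S a := by
  by_contra hcon
  rw [FinMatroid.Spans] at hcon
  push_neg at hcon
  obtain ⟨haS, haind⟩ := hcon
  have haT : a ∉ T := fun h => by
    rcases hTS a h with h1 | h1
    · exact haS h1
    · exact h1 haind
  have hadep : ¬ M.Indep (insert a T) := by
    rcases ha with h1 | h1
    · exact absurd h1 haT
    · exact h1
  obtain ⟨B, hBind, hTB, hBX, hBspan⟩ :=
    exists_spanning_extension (M := M) hT Finset.subset_union_right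
  have hcard : B.card ≤ S.card := by
    refine indep_card_le_of_spans hS hBind (fun t ht => ?_)
    rcases Finset.mem_union.1 (hBX ht) with h1 | h1
    · exact Or.inl h1
    · exact hTS t h1
  have hlt : B.card < (insert a S).card := by
    rw [Finset.card_insert_of_notMem haS]; omega
  obtain ⟨w, hw, hwB, hwind⟩ := M.exchange hBind haind hlt
  rcases Finset.mem_insert.1 hw with rfl | hwS
  · exact (fun h => h hwind)
      (fun hind => hadep (M.subset_indep (Finset.insert_subset_insert _ hTB) hind))
  · rcases hBspan w (Finset.mem_union_left _ hwS) with h1 | h1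
    · exact hwB h1
    · exact h1 hwind

theorem iri_tomizawa_aux_two (M : FinMatroid U) (I : Finset U) (hI : M.Indep I)
    (u : U) (hu : u ∈ M.sp I) (v : U) (hv : v ∈ M.fundC I u)
    (x : U) (hx : x ∈ M.sp I) (hxu : x ≠ u)
    (y : U) (hy : y ∈ I) (hyv : y ≠ v)
    (hcase : y ∉ M.fundC I u ∨ v ∉ M.fundC I x) :
    y ∈ M.fundC I x ↔ y ∈ M.fundC ((insert u I).erase v) x := by
  classical
  obtain ⟨huI, hudep⟩ := hu
  obtain ⟨hxI, hxdep⟩ := hx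
  rw [FinMatroid.fundC, Finset.mem_filter] at hv
  obtain ⟨hvmem, hJ⟩ := hv
  by_cases hvu : v = u
  · subst hvu
    rw [Finset.erase_insert huI]
  · -- main case: v ∈ I
    have hvI : v ∈ I := by
      rcases Finset.mem_insert.1 hvmem with h | h
      · exact absurd h hvu
      · exact h
    have hyu : y ≠ u := fun h => huI (h ▸ hy)
    have hyx : y ≠ x := fun h => hxI (h ▸ hy)
    have hxy : x ≠ y := hyx.symm
    have hvx : v ≠ x := fun h => hxI (h ▸ hvI)
    have huv : u ≠ v := fun h => hvu h.symm
    set D : Finset U := (I.erase y).erase v with hDdef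
    have hDsub : D ⊆ I := (Finset.erase_subset _ _).trans (Finset.erase_subset _ _)
    have hD : M.Indep D := M.subset_indep hDsub hI
    have hyD : y ∉ D := fun h => Finset.notMem_erase y I ((Finset.erase_subset _ _) h)
    have hvD : v ∉ D := Finset.notMem_erase _ _
    have huD : u ∉ D := fun h => huI (hDsub h)
    have hxD : x ∉ D := fun h => hxI (hDsub h)
    have hIy_eq : I.erase y = insert v D :=
      (Finset.insert_erase (Finset.mem_erase.2 ⟨hyv.symm, hvI⟩)).symm
    have hIv_eq : I.erase v = insert y D := by
      have h1 : (I.erase y).erase v = (I.erase v).erase y := by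
        ext z; simp only [Finset.mem_erase]; tauto
      rw [hDdef, h1, Finset.insert_erase (Finset.mem_erase.2 ⟨hyv, hy⟩)]
    have hI_eq : I = insert v (insert y D) := by
      rw [← hIv_eq, Finset.insert_erase hvI]
    have hJ_eq : (insert u I).erase v = insert u (insert y D) := by
      rw [Finset.erase_insert_of_ne huv, hIv_eq]
    have hJy_eq : ((insert u I).erase v).erase y = insert u D := by
      rw [hJ_eq, Finset.erase_insert_of_ne hyu.symm, Finset.erase_insert hyD]
    have hA_eq : (insert x I).erase y = insert x (insert v D) := by
      rw [Finset.erase_insert_of_ne hxy, hIy_eq]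
    have hB_eq : (insert x ((insert u I).erase v)).erase y
        = insert x (insert u D) := by
      rw [Finset.erase_insert_of_ne hxy, hJy_eq]
    have hJind : M.Indep (insert u (insert y D)) := by rwa [hJ_eq] at hJ
    have hIyind : M.Indep (insert v D) := by
      rw [← hIy_eq]; exact M.subset_indep (Finset.erase_subset _ _) hI
    have hJyind : M.Indep (insert u D) :=
      M.subset_indep (Finset.insert_subset_insert _ (Finset.subset_insert _ _)) hJind
    have hyJ : y ∈ (insert u I).erase v :=
      Finset.mem_erase.2 ⟨hyv, Finset.mem_insert_of_mem hy⟩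
    -- reduce the goal to independence of the two exchanged sets
    rw [FinMatroid.fundC, FinMatroid.fundC, Finset.mem_filter, Finset.mem_filter,
      hA_eq, hB_eq]
    simp only [Finset.mem_insert, hy, hyJ, or_true, true_and]
    -- distinguish the two cases of `hcase`
    rcases hcase with hcA | hcB
    · -- y ∉ fundC I u
      have hadep : ¬ M.Indep (insert u (insert v D)) := by
        intro h
        apply hcA
        rw [FinMatroid.fundC, Finset.mem_filter]
        refine ⟨Finset.mem_insert_of_mem hy, ?_⟩
        rwa [Finset.erase_insert_of_ne hyu.symm, hIy_eq]
      have hmut1 : ∀ t ∈ insert u D, M.Spans (insert v D) t := by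
        intro t ht
        rcases Finset.mem_insert.1 ht with rfl | ht
        · exact Or.inr hadep
        · exact Or.inl (Finset.mem_insert_of_mem ht)
      have hmut2 : ∀ t ∈ insert v D, M.Spans (insert u D) t := by
        intro t ht
        rcases Finset.mem_insert.1 ht with rfl | ht
        · refine Or.inr ?_
          rwa [Finset.insert_comm]
        · exact Or.inl (Finset.mem_insert_of_mem ht)
      constructor
      · intro hAind
        by_contra hBdep
        have : M.Spans (insert v D) x :=
          spans_trans hIyind hJyind hmut1 (Or.inr hBdep)
        rcases this with h | h
        · rcases Finset.mem_insert.1 h with h | h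
          · exact hvx h.symm
          · exact hxD h
        · exact h hAind
      · intro hBind
        by_contra hAdep
        have : M.Spans (insert u D) x :=
          spans_trans hJyind hIyind hmut2 (Or.inr hAdep)
        rcases this with h | h
        · rcases Finset.mem_insert.1 h with h | h
          · exact hxu h
          · exact hxD h
        · exact h hBind
    · -- v ∉ fundC I x
      have hbdep : ¬ M.Indep (insert x (insert y D)) := by
        intro h
        apply hcB
        rw [FinMatroid.fundC, Finset.mem_filter]
        refine ⟨Finset.mem_insert_of_mem hvI, ?_⟩
        rwa [Finset.erase_insert_of_ne hvx.symm, hIv_eq]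
      by_cases hxDind : M.Indep (insert x D)
      · -- Indep (insert x D); use the spanning element y
        have hyspan : M.Spans (insert x D) y := by
          refine Or.inr ?_
          rwa [Finset.insert_comm]
        have key : M.Spans (insert x D) v ↔ M.Spans (insert x D) u := by
          constructor
          · intro hvspan
            refine spans_trans hxDind hI (fun t ht => ?_) (Or.inr hudep)
            rw [hI_eq] at ht
            rcases Finset.mem_insert.1 ht with rfl | ht
            · exact hvspan
            · rcases Finset.mem_insert.1 ht with rfl | ht
              · exact hyspan
              · exact Or.inl (Finset.mem_insert_of_mem ht)
          · intro huspan
            have hvJ : M.Spans (insert u (insert y D)) v := by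
              refine Or.inr ?_
              have : insert v (insert u (insert y D)) = insert u I := by
                rw [← hJ_eq, Finset.insert_erase hvmem]
              rw [this]; exact hudep
            refine spans_trans hxDind hJind (fun t ht => ?_) hvJ
            rcases Finset.mem_insert.1 ht with rfl | ht
            · exact huspan
            · rcases Finset.mem_insert.1 ht with rfl | ht
              · exact hyspan
              · exact Or.inl (Finset.mem_insert_of_mem ht)
        constructor
        · intro hAind
          by_contra hBdep
          have huspan : M.Spans (insert x D) u := by
            refine Or.inr ?_
            rwa [Finset.insert_comm]
          have hvspan := key.2 huspan
          rcases hvspan with h | h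
          · rcases Finset.mem_insert.1 h with h | h
            · exact hvx h
            · exact hvD h
          · rw [Finset.insert_comm] at h
            exact h hAind
        · intro hBind
          by_contra hAdep
          have hvspan : M.Spans (insert x D) v := by
            refine Or.inr ?_
            rwa [Finset.insert_comm]
          have huspan := key.1 hvspan
          rcases huspan with h | h
          · rcases Finset.mem_insert.1 h with h | h
            · exact hxu h.symm
            · exact huD h
          · rw [Finset.insert_comm] at h
            exact h hBind
      · -- insert x D is already dependent: both sides dependent
        constructor
        · intro h
          exact absurd (M.subset_indep
            (Finset.insert_subset_insert _ (Finset.subset_insert _ _)) h) hxDind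
        · intro h
          exact absurd (M.subset_indep
            (Finset.insert_subset_insert _ (Finset.subset_insert _ _)) h) hxDind
end

section
/- Let M = (U, I) be a matroid, I a common independent set of matroids M and N on the same ground set U, u ∈ sp_M(I), and v ∈ C_M(u, I). Then for every x ∈ sp_M(I) - u, we have x ∈ sp_M(I + u - v). -/
open Finset
open scoped Classical

variable {U : Type*} [DecidableEq U] [Fintype U]

theorem sp_preserved (M N : FinMatroid U) (I : Finset U)
    (hM : M.Indep I) (hN : N.Indep I)
    (u : U) (hu : u ∈ M.sp I) (v : U) (hv : v ∈ M.fundC I u)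
    (x : U) (hx : x ∈ M.sp I) (hxu : x ≠ u) :
    x ∈ M.sp ((insert u I).erase v) := by
  obtain ⟨huI, huDep⟩ := hu
  obtain ⟨hxI, hxDep⟩ := hx
  simp only [FinMatroid.fundC, Finset.mem_filter, Finset.mem_insert] at hv
  obtain ⟨hvmem, hJindep⟩ := hv
  set J := (insert u I).erase v with hJ
  have hxJ : x ∉ J := by
    intro hxJ
    have := Finset.mem_of_mem_erase hxJ
    rcases Finset.mem_insert.1 this with h | h
    · exact hxu h
    · exact hxI h
  refine ⟨hxJ, ?_⟩
  rcases hvmem with hvu | hvI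
  · -- v = u, so J = I
    subst hvu
    have hJI : J = I := by
      rw [hJ, Finset.erase_insert huI]
    rw [hJI]
    exact hxDep
  · -- v ∈ I
    intro hcontra
    have hvu : v ≠ u := fun h => huI (h ▸ hvI)
    have hcard : I.card < (insert x J).card := by
      have h1 : J.card = I.card := by
        rw [hJ, Finset.card_erase_of_mem (Finset.mem_insert_of_mem hvI),
          Finset.card_insert_of_notMem huI]
        omega
      rw [Finset.card_insert_of_notMem hxJ, h1]
      omega
    obtain ⟨w, hwmem, hwI, hwindep⟩ := M.exchange hM hcontra hcard
    rcases Finset.mem_insert.1 hwmem with hw | hw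
    · exact hxDep (hw ▸ hwindep)
    · have := Finset.mem_of_mem_erase hw
      rcases Finset.mem_insert.1 this with h | h
      · exact huDep (h ▸ hwindep)
      · exact hwI h
end

section
/- Let B be a base of the direct sum matroid H⟨F⟩ constructed by iteratively peeling off the ≽_H-maximal layers T₁, T₂, …, T_{i_F} of F (with T_i the head of the remaining set and T_i-matroid being (H/T_{1,i-1})|T_i). Then for every integer i ∈ [i_F], B ∩ T_{1,i} is a base of H|T_{1,i}, where T_{1,i} = T₁ ∪ ⋯ ∪ T_i. In particular, B is a base of H|F. -/
open Finset
open scoped Classical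

variable {U : Type*} [DecidableEq U] [Fintype U]

section MainHelpers

variable (M : FinMatroid U)

lemma indep_card_le_rkOf {I X : Finset U} (hIX : I ⊆ X) (hI : M.Indep I) :
    I.card ≤ rkOf M.Indep X :=
  Finset.le_sup (Finset.mem_filter.2 ⟨Finset.mem_powerset.2 hIX, hI⟩)

lemma exists_indep_rkOf (X : Finset U) :
    ∃ I, I ⊆ X ∧ M.Indep I ∧ I.card = rkOf M.Indep X := by
  have hne : ((X.powerset).filter M.Indep).Nonempty :=
    ⟨∅, Finset.mem_filter.2 ⟨Finset.mem_powerset.2 (Finset.empty_subset X), M.empty_indep⟩⟩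
  obtain ⟨I, hI, hcard⟩ := Finset.exists_mem_eq_sup _ hne Finset.card
  simp only [Finset.mem_filter, Finset.mem_powerset] at hI
  exact ⟨I, hI.1, hI.2, hcard.symm⟩

lemma exists_extend_aux (X : Finset U) :
    ∀ d (I : Finset U), I ⊆ X → M.Indep I → rkOf M.Indep X ≤ I.card + d →
    ∃ J, I ⊆ J ∧ J ⊆ X ∧ M.Indep J ∧ J.card = rkOf M.Indep X := by
  intro d
  induction d with
  | zero =>
    intro I hIX hI hle
    exact ⟨I, subset_rfl, hIX, hI, le_antisymm (indep_card_le_rkOf M hIX hI) (by simpa using hle)⟩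
  | succ d ih =>
    intro I hIX hI hle
    by_cases hc : I.card = rkOf M.Indep X
    · exact ⟨I, subset_rfl, hIX, hI, hc⟩
    · have hlt : I.card < rkOf M.Indep X := lt_of_le_of_ne (indep_card_le_rkOf M hIX hI) hc
      obtain ⟨K, hKX, hK, hKc⟩ := exists_indep_rkOf M X
      obtain ⟨u, huK, huI, hind⟩ := M.exchange hI hK (by omega)
      obtain ⟨J, hJ1, hJ2, hJ3, hJ4⟩ := ih (insert u I)
        (Finset.insert_subset (hKX huK) hIX) hind
        (by rw [Finset.card_insert_of_notMem huI]; omega)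
      exact ⟨J, (Finset.subset_insert u I).trans hJ1, hJ2, hJ3, hJ4⟩

lemma exists_extend {I X : Finset U} (hIX : I ⊆ X) (hI : M.Indep I) :
    ∃ J, I ⊆ J ∧ J ⊆ X ∧ M.Indep J ∧ J.card = rkOf M.Indep X :=
  exists_extend_aux M X (rkOf M.Indep X) I hIX hI (Nat.le_add_left _ _)

lemma rkOf_union_le (A X : Finset U) :
    rkOf M.Indep (A ∪ X) ≤ rkOf M.Indep X + A.card := by
  obtain ⟨J, hJ, hJi, hJc⟩ := exists_indep_rkOf M (A ∪ X)
  rw [← hJc]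
  have h1 : (J ∩ X).card ≤ rkOf M.Indep X :=
    indep_card_le_rkOf M Finset.inter_subset_right (M.subset_indep Finset.inter_subset_left hJi)
  have h2 : (J \ X).card ≤ A.card := Finset.card_le_card (fun u hu => by
    rcases Finset.mem_sdiff.1 hu with ⟨h3, h4⟩
    rcases Finset.mem_union.1 (hJ h3) with h | h
    · exact h
    · exact absurd h h4)
  have h3 : (J ∩ X).card + (J \ X).card = J.card := Finset.card_inter_add_card_sdiff J X
  omega

end MainHelpers

/-- `pre e f` means `e ≽_H f`.  The layers `T 0, T 1, …` are the successive heads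
(≽-maximal layers) of `F`: within a layer all elements are ≽-equivalent, earlier
layers are strictly preferred to later ones, and the layers partition `F`.
The `i`-th summand matroid is `(H / T_{1,i-1}) | T i`, and a base `B` of the
direct sum `H⟨F⟩` satisfies: `B ∩ T_{1,i}` is a base of `H | T_{1,i}` for every
`i`; in particular `B` is a base of `H | F`. -/
theorem base_of_layered_direct_sum (M : FinMatroid U) (pre : U → U → Prop)
    (htrans : Transitive pre) (htot : ∀ a b : U, pre a b ∨ pre b a)
    (F : Finset U) (n : ℕ) (T : Fin n → Finset U)
    (hne : ∀ i, (T i).Nonempty)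
    (hdisj : ∀ i j : Fin n, i ≠ j → Disjoint (T i) (T j))
    (hunion : Finset.univ.biUnion T = F)
    (hwithin : ∀ i : Fin n, ∀ e ∈ T i, ∀ f ∈ T i, pre e f)
    (hacross : ∀ i j : Fin n, i < j → ∀ e ∈ T i, ∀ f ∈ T j, pre e f ∧ ¬ pre f e)
    (B : Finset U)
    (hB : BaseOf (fun I => I ⊆ F ∧ ∀ i : Fin n,
      RestrictIndep (ContractIndepOf M.Indep
        ((Finset.univ.filter (fun j : Fin n => j < i)).biUnion T)) (T i) (I ∩ T i)) B) :
    (∀ i : Fin n, BaseOf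
        (RestrictIndep M.Indep ((Finset.univ.filter (fun j : Fin n => j ≤ i)).biUnion T))
        (B ∩ (Finset.univ.filter (fun j : Fin n => j ≤ i)).biUnion T)) ∧
      BaseOf (RestrictIndep M.Indep F) B := by
  classical
  obtain ⟨⟨hBF, hBi⟩, hBmax⟩ := hB
  set S : ℕ → Finset U := fun m => (Finset.univ.filter (fun j : Fin n => (j : ℕ) < m)).biUnion T
    with hSdef
  have hSmono : ∀ a b : ℕ, a ≤ b → S a ⊆ S b := by
    intro a b hab
    apply Finset.biUnion_subset_biUnion_of_subset_left
    intro j hj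
    simp only [Finset.mem_filter, Finset.mem_univ, true_and] at hj ⊢
    omega
  have hS0 : S 0 = ∅ := by
    show (Finset.univ.filter (fun j : Fin n => (j : ℕ) < 0)).biUnion T = ∅
    have h0 : (Finset.univ.filter (fun j : Fin n => (j : ℕ) < 0)) = ∅ :=
      Finset.filter_false_of_mem (fun j _ => by omega)
    rw [h0, Finset.biUnion_empty]
  have hSn : S n = F := by
    rw [← hunion]
    apply Finset.biUnion_congr _ (fun _ _ => rfl)
    ext j
    simp only [Finset.mem_filter, Finset.mem_univ, true_and, iff_true]
    exact j.isLt
  have hsucc : ∀ (m : ℕ) (h : m < n), S (m + 1) = S m ∪ T ⟨m, h⟩ := by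
    intro m h
    ext u
    simp only [hSdef, Finset.mem_biUnion, Finset.mem_filter, Finset.mem_univ, true_and,
      Finset.mem_union]
    constructor
    · rintro ⟨j, hj, hu⟩
      rcases Nat.lt_succ_iff_lt_or_eq.1 hj with h' | h'
      · exact Or.inl ⟨j, h', hu⟩
      · exact Or.inr (by rwa [show j = ⟨m, h⟩ from Fin.ext h'] at hu)
    · rintro (⟨j, hj, hu⟩ | hu)
      · exact ⟨j, Nat.lt_succ_of_lt hj, hu⟩
      · exact ⟨⟨m, h⟩, Nat.lt_succ_self m, hu⟩
  have hdisjS : ∀ (i : Fin n) (m : ℕ), m ≤ (i : ℕ) → Disjoint (T i) (S m) := by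
    intro i m hm
    rw [Finset.disjoint_biUnion_right]
    intro j hj
    simp only [Finset.mem_filter, Finset.mem_univ, true_and] at hj
    exact hdisj i j (by intro h; subst h; omega)
  have hlt : ∀ i : Fin n,
      (Finset.univ.filter (fun j : Fin n => j < i)).biUnion T = S (i : ℕ) := by
    intro i
    apply Finset.biUnion_congr _ (fun _ _ => rfl)
    exact Finset.filter_congr (fun j _ => Fin.lt_def)
  have hle : ∀ i : Fin n,
      (Finset.univ.filter (fun j : Fin n => j ≤ i)).biUnion T = S ((i : ℕ) + 1) := by
    intro i
    apply Finset.biUnion_congr _ (fun _ _ => rfl)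
    exact Finset.filter_congr (fun j _ => by rw [Fin.le_def, Nat.lt_succ_iff])
  have hBi' : ∀ i : Fin n, B ∩ T i ⊆ T i ∧ Disjoint (B ∩ T i) (S (i : ℕ)) ∧
      rkOf M.Indep ((B ∩ T i) ∪ S (i : ℕ)) = rkOf M.Indep (S (i : ℕ)) + (B ∩ T i).card := by
    intro i
    have := hBi i
    rw [RestrictIndep, ContractIndepOf, hlt i] at this
    exact ⟨this.1, this.2.1, this.2.2⟩
  -- the key claim, by strong induction
  have key : ∀ m, m ≤ n → M.Indep (B ∩ S m) ∧ (B ∩ S m).card = rkOf M.Indep (S m) := by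
    intro m
    induction m using Nat.strong_induction_on with
    | _ m ih =>
    intro hmn
    match m, ih, hmn with
    | 0, _, _ =>
      constructor
      · rw [hS0, Finset.inter_empty]; exact M.empty_indep
      · rw [hS0, Finset.inter_empty]
        have h1 : rkOf M.Indep (∅ : Finset U) ≤ 0 := by
          apply Finset.sup_le
          intro I hI
          simp only [Finset.mem_filter, Finset.mem_powerset, Finset.subset_empty] at hI
          simp [hI.1]
        simp [Nat.le_zero.1 h1]
    | m + 1, ih, hmn =>
      have hmn' : m < n := hmn
      set i : Fin n := ⟨m, hmn'⟩ with hidef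
      obtain ⟨hmind, hmcard⟩ := ih m (Nat.lt_succ_self m) (le_of_lt hmn')
      obtain ⟨hTiB, hdisTi, hrkTi⟩ := hBi' i
      have hSm1 : S (m + 1) = S m ∪ T i := hsucc m hmn'
      have hBsplit : B ∩ S (m + 1) = (B ∩ S m) ∪ (B ∩ T i) := by
        rw [hSm1, Finset.inter_union_distrib_left]
      have hdisB : Disjoint (B ∩ S m) (B ∩ T i) :=
        Disjoint.mono Finset.inter_subset_right Finset.inter_subset_right
          (hdisjS i m le_rfl).symm
      have hcardsplit : (B ∩ S (m + 1)).card = (B ∩ S m).card + (B ∩ T i).card := by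
        rw [hBsplit, Finset.card_union_of_disjoint hdisB]
      -- independence of B ∩ S (m+1)
      have hind1 : M.Indep (B ∩ S (m + 1)) ∧
          (B ∩ S (m + 1)).card = rkOf M.Indep ((B ∩ T i) ∪ S m) := by
        obtain ⟨J, hJ1, hJ2, hJ3, hJ4⟩ := exists_extend M
          (show B ∩ S m ⊆ (B ∩ T i) ∪ S m from
            Finset.inter_subset_right.trans Finset.subset_union_right) hmind
        have hJScard : (J ∩ S m).card ≤ (B ∩ S m).card := by
          rw [hmcard]
          exact indep_card_le_rkOf M Finset.inter_subset_right
            (M.subset_indep Finset.inter_subset_left hJ3)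
        have hJS : B ∩ S m = J ∩ S m :=
          Finset.eq_of_subset_of_card_le
            (Finset.subset_inter hJ1 Finset.inter_subset_right) hJScard
        have hJd_sub : J \ S m ⊆ B ∩ T i := by
          intro u hu
          rcases Finset.mem_sdiff.1 hu with ⟨h3, h4⟩
          rcases Finset.mem_union.1 (hJ2 h3) with h | h
          · exact h
          · exact absurd h h4
        have hJcards : (J ∩ S m).card + (J \ S m).card = J.card :=
          Finset.card_inter_add_card_sdiff J (S m)
        have hrkval : rkOf M.Indep ((B ∩ T i) ∪ S m)
            = (B ∩ S m).card + (B ∩ T i).card := by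
          rw [hrkTi, hmcard]
        have hJd_card : (B ∩ T i).card ≤ (J \ S m).card := by
          have := hJS
          omega
        have hJd : J \ S m = B ∩ T i :=
          Finset.eq_of_subset_of_card_le hJd_sub hJd_card
        have hJeq : J = B ∩ S (m + 1) := by
          rw [hBsplit, hJS, ← hJd]
          ext v
          simp only [Finset.mem_union, Finset.mem_inter, Finset.mem_sdiff]
          tauto
        constructor
        · rw [← hJeq]; exact hJ3
        · rw [← hJeq, hJ4]
      -- spanning
      have hspan : (B ∩ S (m + 1)).card = rkOf M.Indep (S (m + 1)) := by
        have hub : (B ∩ S (m + 1)).card ≤ rkOf M.Indep (S (m + 1)) :=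
          indep_card_le_rkOf M Finset.inter_subset_right hind1.1
        by_contra hne'
        have hltrk : (B ∩ S (m + 1)).card < rkOf M.Indep (S (m + 1)) :=
          lt_of_le_of_ne hub hne'
        obtain ⟨K, hKS, hKind, hKcard⟩ := exists_indep_rkOf M (S (m + 1))
        obtain ⟨u, huK, huBS, huind⟩ := M.exchange hind1.1 hKind (by omega)
        have huS : u ∈ S (m + 1) := hKS huK
        have huB : u ∉ B := fun h => huBS (Finset.mem_inter.2 ⟨h, huS⟩)
        obtain ⟨j, hj, huT⟩ : ∃ j : Fin n, (j : ℕ) < m + 1 ∧ u ∈ T j := by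
          simp only [hSdef, Finset.mem_biUnion, Finset.mem_filter, Finset.mem_univ,
            true_and] at huS
          exact huS
        have huF : u ∈ F := by
          rw [← hunion]
          exact Finset.mem_biUnion.2 ⟨j, Finset.mem_univ j, huT⟩
        -- B' := insert u B satisfies the predicate
        have hpred : insert u B ⊆ F ∧ ∀ k : Fin n,
            RestrictIndep (ContractIndepOf M.Indep
              ((Finset.univ.filter (fun j' : Fin n => j' < k)).biUnion T)) (T k)
              (insert u B ∩ T k) := by
          refine ⟨Finset.insert_subset huF hBF, ?_⟩
          intro k
          by_cases hkj : k = j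
          · subst hkj
            rw [Finset.insert_inter_of_mem huT]
            refine ⟨Finset.insert_subset huT Finset.inter_subset_right, ?_⟩
            rw [hlt k]
            obtain ⟨_, hdisk, hrkk⟩ := hBi' k
            have hjn : (k : ℕ) ≤ m := Nat.lt_succ_iff.1 hj
            obtain ⟨hkind, hkcard⟩ := ih (k : ℕ) (Nat.lt_succ_of_le hjn) (le_of_lt k.isLt)
            have huSk : u ∉ S (k : ℕ) :=
              Finset.disjoint_left.1 (hdisjS k (k : ℕ) le_rfl) huT
            constructor
            · exact Finset.disjoint_insert_left.2 ⟨huSk, hdisk⟩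
            · -- rank condition
              have huBT : u ∉ B ∩ T k := fun h => huB (Finset.mem_inter.1 h).1
              have hcardins : (insert u (B ∩ T k)).card = (B ∩ T k).card + 1 :=
                Finset.card_insert_of_notMem huBT
              have hub2 : rkOf M.Indep (insert u (B ∩ T k) ∪ S (k : ℕ))
                  ≤ rkOf M.Indep (S (k : ℕ)) + ((B ∩ T k).card + 1) := by
                have := rkOf_union_le M (insert u (B ∩ T k)) (S (k : ℕ))
                rwa [hcardins] at this
              have hksucc : S ((k : ℕ) + 1) = S (k : ℕ) ∪ T k := by
                have := hsucc (k : ℕ) k.isLt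
                rwa [show (⟨(k : ℕ), k.isLt⟩ : Fin n) = k from Fin.ext rfl] at this
              -- lower bound witness
              have hWsub : insert u (B ∩ S ((k : ℕ) + 1)) ⊆
                  insert u (B ∩ T k) ∪ S (k : ℕ) := by
                intro v hv
                rcases Finset.mem_insert.1 hv with rfl | hv
                · exact Finset.mem_union_left _ (Finset.mem_insert_self _ _)
                · have hv' := Finset.mem_inter.1 hv
                  rw [hksucc] at hv'
                  rcases Finset.mem_union.1 hv'.2 with h | h
                  · exact Finset.mem_union_right _ h
                  · exact Finset.mem_union_left _
                      (Finset.mem_insert_of_mem (Finset.mem_inter.2 ⟨hv'.1, h⟩))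
              have hWind : M.Indep (insert u (B ∩ S ((k : ℕ) + 1))) := by
                refine M.subset_indep ?_ huind
                apply Finset.insert_subset_insert
                exact Finset.inter_subset_inter subset_rfl (hSmono _ _ (by omega))
              have huBSk : u ∉ B ∩ S ((k : ℕ) + 1) :=
                fun h => huB (Finset.mem_inter.1 h).1
              have hWcard : (insert u (B ∩ S ((k : ℕ) + 1))).card
                  = (B ∩ S ((k : ℕ) + 1)).card + 1 :=
                Finset.card_insert_of_notMem huBSk
              have hsplitk : (B ∩ S ((k : ℕ) + 1)).card
                  = (B ∩ S (k : ℕ)).card + (B ∩ T k).card := by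
                have hdisk2 : Disjoint (B ∩ S (k : ℕ)) (B ∩ T k) :=
                  Disjoint.mono Finset.inter_subset_right
                    Finset.inter_subset_right (hdisjS k (k : ℕ) le_rfl).symm
                rw [hksucc, Finset.inter_union_distrib_left,
                  Finset.card_union_of_disjoint hdisk2]
              have hlb : rkOf M.Indep (S (k : ℕ)) + ((B ∩ T k).card + 1)
                  ≤ rkOf M.Indep (insert u (B ∩ T k) ∪ S (k : ℕ)) := by
                have := indep_card_le_rkOf M hWsub hWind
                omega
              rw [hcardins]
              omega
          · have hneq : insert u B ∩ T k = B ∩ T k := by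
              apply Finset.insert_inter_of_notMem
              exact Finset.disjoint_left.1 (hdisj j k (fun h => hkj h.symm)) huT
            rw [hneq]
            exact hBi k
        have := hBmax (insert u B) hpred (Finset.subset_insert u B)
        exact huB (this ▸ Finset.mem_insert_self u B)
      exact ⟨hind1.1, hspan⟩
  constructor
  · intro i
    rw [hle i]
    obtain ⟨hind, hcard⟩ := key ((i : ℕ) + 1) i.isLt
    refine ⟨⟨Finset.inter_subset_right, hind⟩, ?_⟩
    rintro J ⟨hJsub, hJind⟩ hsub
    have hc : J.card ≤ (B ∩ S ((i : ℕ) + 1)).card := by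
      rw [hcard]; exact indep_card_le_rkOf M hJsub hJind
    exact (Finset.eq_of_subset_of_card_le hsub hc).symm
  · obtain ⟨hind, hcard⟩ := key n le_rfl
    rw [hSn, Finset.inter_eq_left.2 hBF] at hind hcard
    refine ⟨⟨hBF, hind⟩, ?_⟩
    rintro J ⟨hJsub, hJind⟩ hsub
    have hc : J.card ≤ B.card := by
      rw [hcard]; exact indep_card_le_rkOf M hJsub hJind
    exact (Finset.eq_of_subset_of_card_le hsub hc).symm
end

section
/- (Rado's theorem) Let H be a matroid on ground set F, let D be a finite set, and let F(·) assign to each d ∈ D a subset F(d) ⊆ F so that the F(d) are pairwise disjoint and F = ⋃_{d∈D[F]} F(d), where D[F] = {d : F(d) ≠ ∅}. Then there exists a set I ⊆ F independent in H with |I ∩ F(d)| = 1 for every d ∈ D[F] (equivalently, a common independent set of the partition matroid and H of size |D[F]|) if and only if r_H(⋃_{d∈X} F(d)) ≥ |X| for every subset X ⊆ D[F]. -/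
/-!
Shrink the sets `F d` one element at a time while keeping the rank condition. Suppose `F d₀`
contains `x ≠ y`, deleting `x` violates the condition at `X` and deleting `y` violates it at `Y`.
Then `d₀ ∈ X ∩ Y`, so the two shrunk unions `A` and `B` satisfy `A ∪ B ⊇ F(X ∪ Y)` and
`A ∩ B ⊇ F((X ∩ Y) \ {d₀})`, and submodularity of the rank contradicts the condition at those two
index sets. Disjointness of the `F d` lets a transversal of the shrunk family serve for the
original one. Once every `F d` is a singleton, the condition at all of `D[F]` says that their
union is independent.
-/

open Finset
open scoped Classical

variable {U : Type*} [DecidableEq U] [Fintype U]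

section UpdateErase

variable {α D : Type*} [DecidableEq α] [DecidableEq D] {F : D → Finset α} {X Y : Finset D}
  {d₀ d : D} {x y u : α}

lemma mem_update_erase :
    u ∈ Function.update F d₀ ((F d₀).erase x) d ↔ u ∈ F d ∧ (d = d₀ → u ≠ x) := by
  rcases eq_or_ne d d₀ with rfl | hd <;> simp [*, and_comm]

lemma update_erase_subset (F : D → Finset α) (d₀ : D) (x : α) (d : D) :
    Function.update F d₀ ((F d₀).erase x) d ⊆ F d :=
  fun _ hu => (mem_update_erase.1 hu).1

lemma sum_card_update_erase_lt {S : Finset D} (hd₀ : d₀ ∈ S) (hx : x ∈ F d₀) :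
    ∑ d ∈ S, (Function.update F d₀ ((F d₀).erase x) d).card < ∑ d ∈ S, (F d).card :=
  sum_lt_sum (fun d _ => card_le_card (update_erase_subset F d₀ x d))
    ⟨d₀, hd₀, by simpa using card_erase_lt_of_mem hx⟩

lemma biUnion_update_of_notMem (s : Finset α) (h : d₀ ∉ X) :
    X.biUnion (Function.update F d₀ s) = X.biUnion F :=
  biUnion_congr rfl fun _ hd => Function.update_of_ne (ne_of_mem_of_not_mem hd h) _ _

lemma biUnion_erase_inter_subset_inter_update (s t : Finset α) :
    ((X ∩ Y).erase d₀).biUnion F ⊆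
      X.biUnion (Function.update F d₀ s) ∩ Y.biUnion (Function.update F d₀ t) := by
  refine subset_inter ?_ ?_
  · rw [← biUnion_update_of_notMem s (notMem_erase _ _)]
    exact biUnion_subset_biUnion_of_subset_left _ ((erase_subset _ _).trans inter_subset_left)
  · rw [← biUnion_update_of_notMem t (notMem_erase _ _)]
    exact biUnion_subset_biUnion_of_subset_left _ ((erase_subset _ _).trans inter_subset_right)

lemma biUnion_union_subset_union_update_erase (hxy : x ≠ y) (hX : d₀ ∈ X) (hY : d₀ ∈ Y) :
    (X ∪ Y).biUnion F ⊆ X.biUnion (Function.update F d₀ ((F d₀).erase x)) ∪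
      Y.biUnion (Function.update F d₀ ((F d₀).erase y)) := by
  intro u hu
  obtain ⟨d, hd, hud⟩ := mem_biUnion.1 hu
  simp only [mem_union, mem_biUnion, mem_update_erase]
  rcases eq_or_ne d d₀ with rfl | hdd₀
  · by_cases hux : u = x
    · exact .inr ⟨d, hY, hud, fun _ => hux ▸ hxy⟩
    · exact .inl ⟨d, hX, hud, fun _ => hux⟩
  · rcases mem_union.1 hd with hdX | hdY
    exacts [.inl ⟨d, hdX, hud, (absurd · hdd₀)⟩, .inr ⟨d, hdY, hud, (absurd · hdd₀)⟩]

end UpdateErase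

namespace FinMatroid

variable {M : FinMatroid U} {I X Y : Finset U}

lemma card_le_rk (hI : M.Indep I) (hIX : I ⊆ X) : I.card ≤ M.rk X :=
  le_sup (mem_filter.2 ⟨mem_powerset.2 hIX, hI⟩)

lemma rk_le_card : M.rk X ≤ X.card :=
  Finset.sup_le fun _ hI => card_le_card (mem_powerset.1 (mem_filter.1 hI).1)

lemma exists_indep_card_eq_rk (M : FinMatroid U) (X : Finset U) :
    ∃ B ⊆ X, M.Indep B ∧ B.card = M.rk X := by
  obtain ⟨B, hB, hBc⟩ :=
    exists_mem_eq_sup _ ⟨∅, mem_filter.2 ⟨empty_mem_powerset _, M.empty_indep⟩⟩ Finset.card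
  rw [mem_filter, mem_powerset] at hB
  exact ⟨B, hB.1, hB.2, hBc.symm⟩

lemma indep_of_card_le_rk (h : X.card ≤ M.rk X) : M.Indep X := by
  obtain ⟨B, hBX, hB, hBc⟩ := M.exists_indep_card_eq_rk X
  rwa [← eq_of_subset_of_card_le hBX (hBc ▸ h)]

lemma rk_mono (h : X ⊆ Y) : M.rk X ≤ M.rk Y := by
  obtain ⟨B, hBX, hB, hBc⟩ := M.exists_indep_card_eq_rk X
  exact hBc ▸ card_le_rk hB (hBX.trans h)

def toMatroid (M : FinMatroid U) : Matroid U :=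
  (IndepMatroid.ofFinset Set.univ M.Indep M.empty_indep
    (fun _ _ hJ hIJ => M.subset_indep hIJ hJ) M.exchange (fun _ _ => Set.subset_univ _)).matroid

@[simp]
lemma toMatroid_indep_coe : M.toMatroid.Indep (I : Set U) ↔ M.Indep I := by
  simp [toMatroid]

lemma eRk_toMatroid (M : FinMatroid U) (X : Finset U) : M.toMatroid.eRk X = M.rk X := by
  refine le_antisymm (Matroid.eRk_le_iff.2 fun I hIX hI => ?_) ?_
  · lift I to Finset U using I.toFinite
    rw [Set.encard_coe_eq_coe_finsetCard, Nat.cast_le]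
    exact card_le_rk (toMatroid_indep_coe.1 hI) (mod_cast hIX)
  · obtain ⟨B, hBX, hB, hBc⟩ := M.exists_indep_card_eq_rk X
    rw [← hBc, ← Set.encard_coe_eq_coe_finsetCard]
    exact (toMatroid_indep_coe.2 hB).encard_le_eRk_of_subset (mod_cast hBX)

lemma rk_union_add_rk_inter_le (M : FinMatroid U) (X Y : Finset U) :
    M.rk (X ∪ Y) + M.rk (X ∩ Y) ≤ M.rk X + M.rk Y := by
  have h := M.toMatroid.eRk_inter_add_eRk_union_le X Y
  rw [← coe_inter, ← coe_union] at h
  simp only [eRk_toMatroid] at h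
  rw [add_comm]
  exact_mod_cast h

section Transversal

variable {D : Type*} (H : FinMatroid U) (S : Finset D) (F : D → Finset U)

def RadoCondition : Prop :=
  ∀ X ⊆ S, X.card ≤ H.rk (X.biUnion F)

def IsIndepTransversal (I : Finset U) : Prop :=
  H.Indep I ∧ I ⊆ S.biUnion F ∧ ∀ d ∈ S, (I ∩ F d).card = 1

variable {H S F}

lemma IsIndepTransversal.radoCondition (hF : (S : Set D).PairwiseDisjoint F) {I : Finset U}
    (hI : H.IsIndepTransversal S F I) : H.RadoCondition S F := by
  obtain ⟨hI, -, hcard⟩ := hI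
  intro X hXS
  have hdisj : (X : Set D).PairwiseDisjoint (fun d => I ∩ F d) :=
    (hF.subset (mod_cast hXS)).mono fun _ => inter_subset_right
  calc X.card = (X.biUnion fun d => I ∩ F d).card := by
        rw [card_biUnion hdisj, sum_congr rfl fun d hd => hcard d (hXS hd), card_eq_sum_ones]
    _ ≤ H.rk (X.biUnion F) :=
        card_le_rk (H.subset_indep (biUnion_subset.2 fun _ _ => inter_subset_left) hI)
          (biUnion_mono fun _ _ => inter_subset_right)

lemma RadoCondition.isIndepTransversal_biUnion (h : H.RadoCondition S F)
    (hF : ∀ d ∈ S, (F d).card ≤ 1) : H.IsIndepTransversal S F (S.biUnion F) := by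
  refine ⟨indep_of_card_le_rk ?_, subset_rfl, fun d hd => ?_⟩
  · calc (S.biUnion F).card ≤ S.card * 1 := card_biUnion_le_card_mul S F 1 hF
      _ ≤ H.rk (S.biUnion F) := by simpa using h S subset_rfl
  · have hpos : 1 ≤ (F d).card := by
      simpa using (h {d} (singleton_subset_iff.2 hd)).trans rk_le_card
    rw [inter_eq_right.2 (subset_biUnion_of_mem F hd)]
    exact le_antisymm (hF d hd) hpos

lemma IsIndepTransversal.of_subset {G : D → Finset U} (hF : (S : Set D).PairwiseDisjoint F)
    (hGF : ∀ d ∈ S, G d ⊆ F d) {I : Finset U} (hI : H.IsIndepTransversal S G I) :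
    H.IsIndepTransversal S F I := by
  obtain ⟨hI, hIS, hcard⟩ := hI
  refine ⟨hI, hIS.trans (biUnion_mono hGF), fun d hd => ?_⟩
  suffices I ∩ F d = I ∩ G d from this ▸ hcard d hd
  refine subset_antisymm (fun u hu => ?_) (inter_subset_inter_left (hGF d hd))
  obtain ⟨huI, huF⟩ := mem_inter.1 hu
  obtain ⟨d', hd', huG⟩ := mem_biUnion.1 (hIS huI)
  obtain rfl : d' = d := hF.elim_finset hd' hd u (hGF d' hd' huG) huF
  exact mem_inter.2 ⟨huI, huG⟩

lemma RadoCondition.mem_of_rk_update_lt [DecidableEq D] (h : H.RadoCondition S F) {X : Finset D}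
    (hXS : X ⊆ S) {d₀ : D} {s : Finset U}
    (hX : H.rk (X.biUnion (Function.update F d₀ s)) < X.card) : d₀ ∈ X := by
  by_contra hd₀
  rw [biUnion_update_of_notMem s hd₀] at hX
  exact (h X hXS).not_gt hX

lemma RadoCondition.update_erase_or [DecidableEq D] (h : H.RadoCondition S F) {d₀ : D} {x y : U}
    (hxy : x ≠ y) :
    H.RadoCondition S (Function.update F d₀ ((F d₀).erase x)) ∨
      H.RadoCondition S (Function.update F d₀ ((F d₀).erase y)) := by
  by_contra! hfail
  simp only [RadoCondition, not_forall, not_le, exists_prop] at hfail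
  obtain ⟨⟨X, hXS, hX⟩, ⟨Y, hYS, hY⟩⟩ := hfail
  have hd₀X := h.mem_of_rk_update_lt hXS hX
  have hd₀Y := h.mem_of_rk_update_lt hYS hY
  set A := X.biUnion (Function.update F d₀ ((F d₀).erase x))
  set B := Y.biUnion (Function.update F d₀ ((F d₀).erase y))
  have hcard_union_inter := card_union_add_card_inter X Y
  have hcard_erase := card_erase_add_one (mem_inter.2 ⟨hd₀X, hd₀Y⟩)
  have hrk_union : (X ∪ Y).card ≤ H.rk (A ∪ B) := (h _ (union_subset hXS hYS)).trans
    (rk_mono (biUnion_union_subset_union_update_erase hxy hd₀X hd₀Y))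
  have hrk_inter : ((X ∩ Y).erase d₀).card ≤ H.rk (A ∩ B) :=
    (h _ ((erase_subset _ _).trans (inter_subset_left.trans hXS))).trans
      (rk_mono (biUnion_erase_inter_subset_inter_update _ _))
  have hsubmod := H.rk_union_add_rk_inter_le A B
  -- |X| + |Y| - 1 ≤ r(A ∪ B) + r(A ∩ B) ≤ r(A) + r(B) ≤ |X| + |Y| - 2
  omega

theorem RadoCondition.exists_isIndepTransversal (hF : (S : Set D).PairwiseDisjoint F)
    (h : H.RadoCondition S F) : ∃ I, H.IsIndepTransversal S F I := by
  classical
  obtain ⟨n, hn⟩ : ∃ n, ∑ d ∈ S, (F d).card = n := ⟨_, rfl⟩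
  induction n using Nat.strong_induction_on generalizing F with
  | _ n ih =>
  by_cases hsmall : ∀ d ∈ S, (F d).card ≤ 1
  · exact ⟨_, h.isIndepTransversal_biUnion hsmall⟩
  simp only [not_forall, not_le, exists_prop] at hsmall
  obtain ⟨d₀, hd₀, hlt⟩ := hsmall
  obtain ⟨x, hx, y, hy, hxy⟩ := one_lt_card.1 hlt
  have of_shrink : ∀ z ∈ F d₀, H.RadoCondition S (Function.update F d₀ ((F d₀).erase z)) →
      ∃ I, H.IsIndepTransversal S F I := by
    intro z hz hG
    obtain ⟨I, hI⟩ := ih _ (hn ▸ sum_card_update_erase_lt hd₀ hz)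
      (hF.mono (update_erase_subset F d₀ z)) hG rfl
    exact ⟨I, hI.of_subset hF fun d _ => update_erase_subset F d₀ z d⟩
  rcases h.update_erase_or (d₀ := d₀) hxy with h' | h'
  exacts [of_shrink x hx h', of_shrink y hy h']

end Transversal

end FinMatroid

theorem rado_general {D : Type*} [Fintype D]
    (H : FinMatroid U) (F : D → Finset U)
    (hdisj : ∀ d d' : D, d ≠ d' → Disjoint (F d) (F d')) :
    (∃ I : Finset U, H.Indep I ∧
        I ⊆ (Finset.univ.filter (fun d => F d ≠ ∅)).biUnion F ∧
        ∀ d ∈ Finset.univ.filter (fun d : D => F d ≠ ∅), (I ∩ F d).card = 1) ↔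
      ∀ X ⊆ Finset.univ.filter (fun d : D => F d ≠ ∅),
        X.card ≤ H.rk (X.biUnion F) := by
  have hF : ((univ.filter fun d => F d ≠ ∅ : Finset D) : Set D).PairwiseDisjoint F :=
    fun d _ d' _ hdd' => hdisj d d' hdd'
  exact ⟨fun ⟨_, hI⟩ => FinMatroid.IsIndepTransversal.radoCondition hF hI,
    FinMatroid.RadoCondition.exists_isIndepTransversal hF⟩

theorem rado {D : Type*} [DecidableEq D] [Fintype D]
    (H : FinMatroid U) (F : D → Finset U)
    (hdisj : ∀ d d' : D, d ≠ d' → Disjoint (F d) (F d')) :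
    (∃ I : Finset U, H.Indep I ∧
        I ⊆ (Finset.univ.filter (fun d => F d ≠ ∅)).biUnion F ∧
        ∀ d ∈ Finset.univ.filter (fun d : D => F d ≠ ∅), (I ∩ F d).card = 1) ↔
      ∀ X ⊆ Finset.univ.filter (fun d : D => F d ≠ ∅),
        X.card ≤ H.rk (X.biUnion F) :=
  rado_general H F hdisj
end
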